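/- arXiv:0806.3833 — 2 statements merged into one kernel-verified Lean document; each statement's English description precedes it below -/
import Mathlib

section
/- For θ ∈ (0,π) and 0 < y < π − θ, the inverse function of f_θ is given by f_θ^{-1}(y) = log(sin y / sin(y + θ)). -/
/-!
Multiplying the defining equation `e^{2iφ} (1 - e^{x+iθ}) = 1 - e^{x-iθ}` by `e^{-iφ}` turns it into
`e^x sin (φ + θ) = sin φ`, i.e. `x = log (sin φ / sin (φ + θ))`. Conversely, for `y ∈ (0, π - θ)` this
`x` makes `e^{2iy}` solve the same equation as `e^{2i f x}`, and `φ ↦ e^{2iφ}` is injective on `(0, π)`.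
-/

open Real

theorem Complex.exp_two_mul_I_mul_one_sub_exp_sub (φ θ x : ℝ) :
    Complex.exp (2 * Complex.I * φ) * (1 - Complex.exp (x + Complex.I * θ)) -
        (1 - Complex.exp (x - Complex.I * θ)) =
      2 * Complex.I * Complex.exp (Complex.I * φ) * ↑(Real.sin φ - Real.exp x * Real.sin (φ + θ)) := by
  have sin_eq (z : ℂ) : Complex.sin z =
      (Complex.exp (Complex.I * z) - (Complex.exp (Complex.I * z))⁻¹) / (2 * Complex.I) := by
    rw [Complex.sin, ← Complex.exp_neg, mul_comm z]
    field_simp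
    ring_nf
    simp [Complex.I_sq]
  have := Complex.exp_ne_zero (Complex.I * φ)
  have := Complex.exp_ne_zero (Complex.I * θ)
  push_cast
  rw [sin_eq, sin_eq, Complex.exp_add, Complex.exp_sub, mul_add, Complex.exp_add,
    show 2 * Complex.I * (φ : ℂ) = Complex.I * φ + Complex.I * φ by ring, Complex.exp_add]
  field_simp
  ring

theorem Complex.exp_two_mul_I_mul_eq_div_iff {φ θ x : ℝ}
    (hD : 1 - Complex.exp (x + Complex.I * θ) ≠ 0) :
    Complex.exp (2 * Complex.I * φ) =
        (1 - Complex.exp (x - Complex.I * θ)) / (1 - Complex.exp (x + Complex.I * θ)) ↔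
      Real.exp x * Real.sin (φ + θ) = Real.sin φ := by
  have h2I : 2 * Complex.I * Complex.exp (Complex.I * φ) ≠ 0 :=
    mul_ne_zero (mul_ne_zero two_ne_zero Complex.I_ne_zero) (Complex.exp_ne_zero _)
  rw [eq_div_iff hD, ← sub_eq_zero, exp_two_mul_I_mul_one_sub_exp_sub, mul_eq_zero,
    or_iff_right h2I, Complex.ofReal_eq_zero, sub_eq_zero, eq_comm]

theorem Complex.exp_two_mul_I_mul_injOn : Set.InjOn (fun φ : ℝ ↦ Complex.exp (2 * Complex.I * φ))
    (Set.Ioo 0 π) := by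
  intro φ ⟨hφ₀, hφπ⟩ ψ ⟨hψ₀, hψπ⟩ h
  -- shifting by `-πi` moves the imaginary parts `2φ, 2ψ ∈ (0, 2π)` into the strip where `exp` is
  -- injective
  have im_shift (t : ℝ) : (2 * Complex.I * t - π * Complex.I).im = 2 * t - π := by simp
  have := congrArg Complex.im <| Complex.exp_inj_of_neg_pi_lt_of_le_pi
    (x := 2 * Complex.I * φ - π * Complex.I) (y := 2 * Complex.I * ψ - π * Complex.I)
    (by rw [im_shift]; linarith) (by rw [im_shift]; linarith)
    (by rw [im_shift]; linarith) (by rw [im_shift]; linarith)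
    (by rw [Complex.exp_sub, Complex.exp_sub]; exact congrArg (· / _) h)
  rw [im_shift, im_shift] at this
  linarith

theorem log_sin_div_sin_add_eq {φ θ x : ℝ} (hφ : sin φ ≠ 0) (h : exp x * sin (φ + θ) = sin φ) :
    log (sin φ / sin (φ + θ)) = x := by
  have hsin : sin (φ + θ) ≠ 0 := fun h0 ↦ hφ (by rw [← h, h0, mul_zero])
  rw [← h, mul_div_assoc, div_self hsin, mul_one, log_exp]

theorem exp_log_sin_div_sin_add_mul {y θ : ℝ} (hy : 0 < sin y) (hyθ : 0 < sin (y + θ)) :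
    exp (log (sin y / sin (y + θ))) * sin (y + θ) = sin y := by
  rw [exp_log (div_pos hy hyθ), div_mul_cancel₀ _ hyθ.ne']

theorem stmt2_general (θ : ℝ) (hθ₀ : 0 < θ) (f : ℝ → ℝ)
    (hf : ∀ x : ℝ, 0 < f x ∧ f x < π ∧
      Complex.exp (2 * Complex.I * (f x : ℂ)) =
        (1 - Complex.exp ((x : ℂ) - Complex.I * (θ : ℂ))) /
        (1 - Complex.exp ((x : ℂ) + Complex.I * (θ : ℂ)))) :
    (∀ y : ℝ, 0 < y → y < π - θ →
      f (Real.log (Real.sin y / Real.sin (y + θ))) = y) ∧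
    (∀ x : ℝ, Real.log (Real.sin (f x) / Real.sin (f x + θ)) = x) := by
  have hD (x : ℝ) : 1 - Complex.exp (x + Complex.I * θ) ≠ 0 :=
    (div_ne_zero_iff.mp ((hf x).2.2 ▸ Complex.exp_ne_zero _)).2
  have hfx (x : ℝ) : exp x * sin (f x + θ) = sin (f x) :=
    (Complex.exp_two_mul_I_mul_eq_div_iff (hD x)).mp (hf x).2.2
  refine ⟨fun y hy₀ hyθ ↦ ?_, fun x ↦ ?_⟩
  · set x := log (sin y / sin (y + θ))
    have hy : exp x * sin (y + θ) = sin y := exp_log_sin_div_sin_add_mul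
      (sin_pos_of_pos_of_lt_pi hy₀ (by linarith)) (sin_pos_of_pos_of_lt_pi (by linarith) (by linarith))
    refine Complex.exp_two_mul_I_mul_injOn ⟨(hf x).1, (hf x).2.1⟩ ⟨hy₀, by linarith⟩ ?_
    exact (hf x).2.2.trans ((Complex.exp_two_mul_I_mul_eq_div_iff (hD x)).mpr hy).symm
  · exact log_sin_div_sin_add_eq (sin_pos_of_pos_of_lt_pi (hf x).1 (hf x).2.1).ne' (hfx x)

/-- For `θ ∈ (0,π)` and `0 < y < π − θ`, the inverse function of
`f_θ` is given by `f_θ⁻¹(y) = log(sin y / sin(y + θ))`. This is expressed by the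
two identities `f(log(sin y / sin(y+θ))) = y` and
`log(sin (f x) / sin (f x + θ)) = x`. -/
theorem stmt2 (θ : ℝ) (hθ₀ : 0 < θ) (hθπ : θ < π) (f : ℝ → ℝ)
    (hf : ∀ x : ℝ, 0 < f x ∧ f x < π ∧
      Complex.exp (2 * Complex.I * (f x : ℂ)) =
        (1 - Complex.exp ((x : ℂ) - Complex.I * (θ : ℂ))) /
        (1 - Complex.exp ((x : ℂ) + Complex.I * (θ : ℂ)))) :
    (∀ y : ℝ, 0 < y → y < π - θ →
      f (Real.log (Real.sin y / Real.sin (y + θ))) = y) ∧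
    (∀ x : ℝ, Real.log (Real.sin (f x) / Real.sin (f x + θ)) = x) :=
  stmt2_general θ hθ₀ f hf
end

section
/- Dirichlet principle uniqueness: Let G be the graph associated to a finite simply connected b-quad-graph with admissible labelling α, and suppose r₁, r₂ : V(G) → (0,∞) both satisfy the circle pattern equation Σ_{[z,z₀] ∈ E(G)} f_{α([z,z₀])}(log r_i(z) − log r_i(z₀)) = π at every interior vertex z₀ and agree on all boundary vertices. Then r₁ = r₂ on all of V(G). -/
/-!
The identity `exp (2 i f) = (1 - e^{x - iθ}) / (1 - e^{x + iθ})` with `0 < f < π` says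
`cot f = (e^{-x} - cos θ) / sin θ`, so `f_θ` is strictly increasing. Hence if `z` maximizes
`log r₁ - log r₂` at an interior vertex, each summand of the circle pattern equation for `r₁` at `z`
is at most the one for `r₂`, and equality of the two sums forces the maximum to spread to all
neighbours of `z`. By connectedness it reaches the boundary, where `log r₁ - log r₂ = 0`; so
`r₁ ≤ r₂`, and by symmetry `r₁ = r₂`.
-/

open Real

lemma tan_pi_div_two_sub_eq_of_cexp_eq {θ x f : ℝ} (hθ₀ : 0 < θ) (hθπ : θ < π)
    (hf₀ : 0 < f) (hfπ : f < π)
    (hf : Complex.exp (2 * Complex.I * (f : ℂ)) =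
        (1 - Complex.exp ((x : ℂ) - Complex.I * (θ : ℂ))) /
        (1 - Complex.exp ((x : ℂ) + Complex.I * (θ : ℂ)))) :
    tan (π / 2 - f) = (exp (-x) - cos θ) / sin θ := by
  have hsin_θ : 0 < sin θ := sin_pos_of_pos_of_lt_pi hθ₀ hθπ
  have hsin_f : 0 < sin f := sin_pos_of_pos_of_lt_pi hf₀ hfπ
  have hden : (1 : ℂ) - Complex.exp ((x : ℂ) + Complex.I * (θ : ℂ)) ≠ 0 := by
    intro h
    have : sin θ = 0 := by simpa [Complex.exp_im] using congrArg Complex.im h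
    exact hsin_θ.ne' this
  rw [eq_div_iff hden] at hf
  have hre := congrArg Complex.re hf
  simp only [Complex.mul_re, Complex.exp_re, Complex.re_ofNat, Complex.I_re, mul_zero,
    Complex.im_ofNat, Complex.I_im, mul_one, sub_self, Complex.ofReal_re, zero_mul, Complex.mul_im,
    add_zero, Complex.ofReal_im, exp_zero, zero_add, one_mul, Complex.sub_re, Complex.one_re,
    Complex.add_re, Complex.add_im, Complex.exp_im, Complex.sub_im, Complex.one_im, zero_sub,
    mul_neg, sub_neg_eq_add, sub_zero, cos_neg] at hre
  rw [sin_two_mul, cos_two_mul'] at hre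
  -- `hre` is `sin f` times the cross-multiplied cotangent identity
  have hcot : sin f * (1 - exp x * cos θ) - cos f * (exp x * sin θ) = 0 := by
    refine (mul_eq_zero.mp ?_).resolve_left hsin_f.ne'
    linear_combination (-1 / 2 : ℝ) * hre + ((1 - exp x * cos θ) / 2) * sin_sq_add_cos_sq f
  rw [tan_eq_sin_div_cos, sin_pi_div_two_sub, cos_pi_div_two_sub, exp_neg,
    div_eq_div_iff hsin_f.ne' hsin_θ.ne']
  field_simp
  linear_combination -hcot

lemma strictMono_of_cexp_eq {θ : ℝ} (hθ₀ : 0 < θ) (hθπ : θ < π) {f : ℝ → ℝ}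
    (hf : ∀ x : ℝ, 0 < f x ∧ f x < π ∧
      Complex.exp (2 * Complex.I * (f x : ℂ)) =
        (1 - Complex.exp ((x : ℂ) - Complex.I * (θ : ℂ))) /
        (1 - Complex.exp ((x : ℂ) + Complex.I * (θ : ℂ)))) :
    StrictMono f := by
  have hmem : ∀ x, π / 2 - f x ∈ Set.Ioo (-(π / 2)) (π / 2) := fun x =>
    ⟨by linarith [(hf x).2.1], by linarith [(hf x).1]⟩
  have htan : ∀ x, tan (π / 2 - f x) = (exp (-x) - cos θ) / sin θ := fun x =>
    tan_pi_div_two_sub_eq_of_cexp_eq hθ₀ hθπ (hf x).1 (hf x).2.1 (hf x).2.2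
  intro x₁ x₂ hx
  have hlt : tan (π / 2 - f x₂) < tan (π / 2 - f x₁) := by
    rw [htan, htan]
    gcongr
    exact sin_pos_of_pos_of_lt_pi hθ₀ hθπ
  linarith [(strictMonoOn_tan.lt_iff_lt (hmem x₂) (hmem x₁)).mp hlt]

namespace SimpleGraph

variable {V : Type*} {G : SimpleGraph V}

lemma Reachable.exists_mem_of_forall_adj_mem {B S : Set V} {a b : V} (hab : G.Reachable a b)
    (ha : a ∈ S) (hb : b ∈ B) (hS : ∀ z ∈ S, z ∉ B → ∀ y, G.Adj z y → y ∈ S) :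
    ∃ c ∈ B, c ∈ S := by
  obtain ⟨w⟩ := hab
  induction w with
  | nil => exact ⟨_, hb, ha⟩
  | @cons z _ _ hadj _ ih =>
    by_cases hzB : z ∈ B
    · exact ⟨z, hzB, ha⟩
    · exact ih (hS z ha hzB _ hadj) hb

variable [Fintype V] [DecidableRel G.Adj]

lemma adj_eq_of_forall_le_of_sum_eq (φ : V → V → ℝ → ℝ)
    (hφ : ∀ z y, G.Adj z y → StrictMono (φ z y)) {u v : V → ℝ} {z : V}
    (hmax : ∀ w, (u - v) w ≤ (u - v) z)
    (heq : ∑ y, (if G.Adj z y then φ z y (u y - u z) else 0) =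
      ∑ y, (if G.Adj z y then φ z y (v y - v z) else 0))
    {y : V} (hzy : G.Adj z y) : (u - v) y = (u - v) z := by
  have hle : ∀ y, u y - u z ≤ v y - v z := fun y => by
    linarith [show u y - v y ≤ u z - v z from hmax y]
  by_contra hne
  have hlt : u y - u z < v y - v z := by
    linarith [show u y - v y < u z - v z from lt_of_le_of_ne (hmax y) hne]
  refine heq.not_lt (Finset.sum_lt_sum (fun w _ => ?_) ⟨y, Finset.mem_univ y, ?_⟩)
  · split_ifs with hzw
    · exact (hφ z w hzw).monotone (hle w)
    · rfl
  · simpa only [if_pos hzy] using hφ z y hzy hlt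

theorem Connected.le_of_sum_eq_of_le (hG : G.Connected) {B : Set V} (hB : B.Nonempty)
    (φ : V → V → ℝ → ℝ) (hφ : ∀ z y, G.Adj z y → StrictMono (φ z y)) {u v : V → ℝ}
    (heq : ∀ z ∉ B, ∑ y, (if G.Adj z y then φ z y (u y - u z) else 0) =
      ∑ y, (if G.Adj z y then φ z y (v y - v z) else 0))
    (hbd : ∀ z ∈ B, u z ≤ v z) : u ≤ v := by
  have : Nonempty V := hG.nonempty
  obtain ⟨z₀, -, hmax⟩ := Finset.univ.exists_max_image (u - v) Finset.univ_nonempty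
  obtain ⟨b, hb⟩ := hB
  obtain ⟨c, hcB, hc⟩ := (hG.preconnected z₀ b).exists_mem_of_forall_adj_mem
    (S := {z | (u - v) z = (u - v) z₀}) rfl hb fun z hz hzB y hzy =>
      (adj_eq_of_forall_le_of_sum_eq φ hφ (fun w => hz ▸ hmax w (Finset.mem_univ w))
        (heq z hzB) hzy).trans hz
  intro z
  have h := hmax z (Finset.mem_univ z)
  simp only [Set.mem_ofPred_eq, Pi.sub_apply] at h hc
  linarith [hbd c hcB]

end SimpleGraph

theorem stmt19_general {V : Type*} [Fintype V]
    (G : SimpleGraph V) [DecidableRel G.Adj] (hG : G.Connected)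
    (B : Set V) (hB : B.Nonempty)
    (α : V → V → ℝ)
    (hα : ∀ x y, G.Adj x y → 0 < α x y ∧ α x y < π)
    (F : ℝ → ℝ → ℝ)
    (hF : ∀ θ, 0 < θ → θ < π → ∀ x : ℝ,
      0 < F θ x ∧ F θ x < π ∧
      Complex.exp (2 * Complex.I * (F θ x : ℂ)) =
        (1 - Complex.exp ((x : ℂ) - Complex.I * (θ : ℂ))) /
        (1 - Complex.exp ((x : ℂ) + Complex.I * (θ : ℂ))))
    (r₁ r₂ : V → ℝ) (hr₁ : ∀ z, 0 < r₁ z) (hr₂ : ∀ z, 0 < r₂ z)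
    (heq₁ : ∀ z, z ∉ B →
      (∑ y : V, (if G.Adj z y then
        F (α z y) (Real.log (r₁ y) - Real.log (r₁ z)) else 0)) = π)
    (heq₂ : ∀ z, z ∉ B →
      (∑ y : V, (if G.Adj z y then
        F (α z y) (Real.log (r₂ y) - Real.log (r₂ z)) else 0)) = π)
    (hbd : ∀ z ∈ B, r₁ z = r₂ z) :
    r₁ = r₂ := by
  have hmono : ∀ z y, G.Adj z y → StrictMono (F (α z y)) := fun z y hzy =>
    strictMono_of_cexp_eq (hα z y hzy).1 (hα z y hzy).2 (hF _ (hα z y hzy).1 (hα z y hzy).2)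
  have hle₁₂ : (fun z => log (r₁ z)) ≤ fun z => log (r₂ z) :=
    hG.le_of_sum_eq_of_le hB (fun z y => F (α z y)) hmono
      (fun z hz => (heq₁ z hz).trans (heq₂ z hz).symm) fun z hz => (congrArg log (hbd z hz)).le
  have hle₂₁ : (fun z => log (r₂ z)) ≤ fun z => log (r₁ z) :=
    hG.le_of_sum_eq_of_le hB (fun z y => F (α z y)) hmono
      (fun z hz => (heq₂ z hz).trans (heq₁ z hz).symm) fun z hz => (congrArg log (hbd z hz)).ge
  funext z
  exact log_injOn_pos (hr₁ z) (hr₂ z) (le_antisymm (hle₁₂ z) (hle₂₁ z))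

/-- Dirichlet principle, uniqueness. Let `G` be a finite
connected graph with nonempty boundary `B` and edge labelling `α` with values
in `(0,π)` on edges, and let `F θ` denote the function `f_θ` (characterized by
`0 < f_θ < π` and `exp(2 i f_θ(x)) = (1 − e^{x−iθ})/(1 − e^{x+iθ})`). If two
positive radius functions `r₁, r₂` satisfy the circle pattern equation
`Σ_{y ∼ z} f_{α(z,y)}(log r_i(y) − log r_i(z)) = π` at every interior vertex
`z` and agree on the boundary, then `r₁ = r₂` everywhere. -/
theorem stmt19 {V : Type*} [Fintype V] [DecidableEq V]
    (G : SimpleGraph V) [DecidableRel G.Adj] (hG : G.Connected)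
    (B : Set V) (hB : B.Nonempty)
    (α : V → V → ℝ) (hαsymm : ∀ x y, α x y = α y x)
    (hα : ∀ x y, G.Adj x y → 0 < α x y ∧ α x y < π)
    (F : ℝ → ℝ → ℝ)
    (hF : ∀ θ, 0 < θ → θ < π → ∀ x : ℝ,
      0 < F θ x ∧ F θ x < π ∧
      Complex.exp (2 * Complex.I * (F θ x : ℂ)) =
        (1 - Complex.exp ((x : ℂ) - Complex.I * (θ : ℂ))) /
        (1 - Complex.exp ((x : ℂ) + Complex.I * (θ : ℂ))))
    (r₁ r₂ : V → ℝ) (hr₁ : ∀ z, 0 < r₁ z) (hr₂ : ∀ z, 0 < r₂ z)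
    (heq₁ : ∀ z, z ∉ B →
      (∑ y : V, (if G.Adj z y then
        F (α z y) (Real.log (r₁ y) - Real.log (r₁ z)) else 0)) = π)
    (heq₂ : ∀ z, z ∉ B →
      (∑ y : V, (if G.Adj z y then
        F (α z y) (Real.log (r₂ y) - Real.log (r₂ z)) else 0)) = π)
    (hbd : ∀ z ∈ B, r₁ z = r₂ z) :
    r₁ = r₂ :=
  stmt19_general G hG B hB α hα F hF r₁ r₂ hr₁ hr₂ heq₁ heq₂ hbd
end
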